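/- Under Notation (*): if (J(H)^s : m) = p is a prime with y ∉ p, then (J(H̃)^s : m) = p, where H̃ is the induced subhypergraph of H on X. -/

import Mathlib

open MvPolynomial

noncomputable section

/-- A finite simple hypergraph on a vertex set `V`: edges are nonempty subsets of `V`
forming an antichain (a clutter). -/
structure Hypergraph' (σ : Type*) where
  V : Finset σ
  E : Finset (Finset σ)
  edge_sub : ∀ e ∈ E, e ⊆ V
  edge_nonempty : ∀ e ∈ E, e.Nonempty
  simple : ∀ e ∈ E, ∀ f ∈ E, e ⊆ f → e = f

/-- The prime ideal generated by the variables indexed by `e`. -/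
def primeOf {σ : Type*} (K : Type*) [Field K] (e : Finset σ) : Ideal (MvPolynomial σ K) :=
  Ideal.span ((fun i => (X i : MvPolynomial σ K)) '' e)

/-- The cover ideal of a set of edges: the intersection of the edge primes. -/
def coverIdeal {σ : Type*} (K : Type*) [Field K] (E : Finset (Finset σ)) :
    Ideal (MvPolynomial σ K) :=
  ⨅ e ∈ E, primeOf K e

/-- The squarefree monomial supported on `T`. -/
def xU {σ : Type*} (K : Type*) [Field K] (T : Finset σ) : MvPolynomial σ K :=
  ∏ i ∈ T, X i
/-- `T` is a vertex cover of the edge set `E`. -/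
def IsCover {σ : Type*} (E : Finset (Finset σ)) (T : Finset σ) : Prop :=
  ∀ e ∈ E, ∃ v ∈ e, v ∈ T

/-- `T` is a minimal vertex cover of the edge set `E`. -/
def IsMinimalCover {σ : Type*} (E : Finset (Finset σ)) (T : Finset σ) : Prop :=
  IsCover E T ∧ ∀ T' ⊂ T, ¬ IsCover E T'

/-- `m` is a minimal monomial generator of the monomial ideal `I`: it lies in `I`, and
every divisor of `m` lying in `I` is associated to `m`. -/
def IsMinMonGen {σ K : Type*} [Field K] (I : Ideal (MvPolynomial σ K))
    (m : MvPolynomial σ K) : Prop :=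
  m ∈ I ∧ ∀ d : MvPolynomial σ K, d ∣ m → d ∈ I → Associated d m

/-- `(V', E')` is a shadow of the hypergraph `H`. -/
def IsShadow {σ : Type*} [DecidableEq σ] (H : Hypergraph' σ) (V' : Finset σ) (E' : Finset (Finset σ)) : Prop :=
  V' ⊆ H.V ∧ (∀ e ∈ E', e ⊆ V') ∧ (∀ e ∈ E', e.Nonempty) ∧
    (∀ e ∈ E', ∀ f ∈ E', e ⊆ f → e = f) ∧
    E'.card = H.E.card ∧ ∀ e ∈ H.E, e ∩ V' ∈ E'

/-- The cover ideal of a hypergraph on vertex set `V'` (edges `E'`, subsets of `V'`),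
as an ideal of the small polynomial ring `K[V']`. -/
def smallCover {σ : Type*} [DecidableEq σ] (K : Type*) [Field K] (V' : Finset σ)
    (E' : Finset (Finset σ)) : Ideal (MvPolynomial {x : σ // x ∈ V'} K) :=
  ⨅ e ∈ E', primeOf K (e.subtype (· ∈ V'))

/-- `(V', E')` is an odd cycle graph `C_{2n+1}` for some positive `n`. -/
def IsOddCycle {σ : Type*} [DecidableEq σ] (V' : Finset σ) (E' : Finset (Finset σ)) : Prop :=
  ∃ n : ℕ, 0 < n ∧ ∃ f : Fin (2 * n + 1) → σ, Function.Injective f ∧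
    V' = Finset.univ.image f ∧ E' = Finset.univ.image (fun i => ({f i, f (i + 1)} : Finset σ))

/- An edge of `H` either contains `y`, and then its prime contains `X y`, or avoids `y`, and then it
is an edge of `H̃`. Hence `J(H) ≤ J(H̃)` and `X y · J(H̃) ≤ J(H)`, so `X y ^ s` multiplies
`(J(H̃)^s : m)` into `(J(H)^s : m) = p`; since `p` is prime and `X y ∉ p`, this gives
`(J(H̃)^s : m) ≤ p`, while `J(H) ≤ J(H̃)` gives the reverse inclusion. -/

theorem Ideal.colon_eq_of_le_of_span_mul_le {R : Type*} [CommRing R] {I I' p : Ideal R}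
    [hp : p.IsPrime] {a : R} {S : Set R} (ha : a ∉ p) (hle : I ≤ I')
    (hmul : Ideal.span {a} * I' ≤ I) (hcolon : I.colon S = p) : I'.colon S = p := by
  refine le_antisymm (fun g hg => ?_) (hcolon ▸ Submodule.colon_mono hle subset_rfl)
  have hag : a * g ∈ p := by
    rw [← hcolon, Submodule.mem_colon]
    intro x hx
    have hgx : g * x ∈ I' := Submodule.mem_colon.mp hg x hx
    simpa only [smul_eq_mul, mul_assoc] using
      hmul (Ideal.mul_mem_mul (Ideal.mem_span_singleton_self a) hgx)
  exact (hp.mem_or_mem hag).resolve_left ha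

theorem Ideal.colon_pow_eq_of_le_of_span_mul_le {R : Type*} [CommRing R] {I I' p : Ideal R}
    [hp : p.IsPrime] {a : R} {S : Set R} (ha : a ∉ p) (hle : I ≤ I')
    (hmul : Ideal.span {a} * I' ≤ I) (n : ℕ) (hcolon : (I ^ n).colon S = p) :
    (I' ^ n).colon S = p := by
  refine Ideal.colon_eq_of_le_of_span_mul_le (a := a ^ n) (fun h => ha (hp.mem_of_pow_mem n h))
    (Ideal.pow_right_mono hle n) ?_ hcolon
  rw [← Ideal.span_singleton_pow, ← mul_pow]
  exact Ideal.pow_right_mono hmul n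

section CoverIdeal

variable {σ : Type*} (K : Type*) [Field K]

theorem X_mem_primeOf {e : Finset σ} {v : σ} (hv : v ∈ e) :
    (X v : MvPolynomial σ K) ∈ primeOf K e :=
  Ideal.subset_span ⟨v, hv, rfl⟩

theorem coverIdeal_le_primeOf {E : Finset (Finset σ)} {e : Finset σ} (he : e ∈ E) :
    coverIdeal K E ≤ primeOf K e :=
  iInf₂_le e he

theorem coverIdeal_anti {E E' : Finset (Finset σ)} (h : E' ⊆ E) :
    coverIdeal K E ≤ coverIdeal K E' :=
  le_iInf₂ fun _ hf => coverIdeal_le_primeOf K (h hf)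

theorem span_X_mul_coverIdeal_le {E E' : Finset (Finset σ)} (y : σ)
    (hE' : ∀ f ∈ E, y ∉ f → f ∈ E') :
    Ideal.span {(X y : MvPolynomial σ K)} * coverIdeal K E' ≤ coverIdeal K E := by
  refine le_iInf₂ fun f hf => ?_
  by_cases hyf : y ∈ f
  · exact Ideal.mul_le_left.trans
      ((Ideal.span_singleton_le_iff_mem _).mpr (X_mem_primeOf K hyf))
  · exact Ideal.mul_le_right.trans (coverIdeal_le_primeOf K (hE' f hf hyf))

end CoverIdeal

theorem colon_induced_of_colon_prime_not_mem_y_general {σ K : Type*} [DecidableEq σ] [Field K]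
    (H : Hypergraph' σ) (y : σ)
    (s : ℕ) (d : σ →₀ ℕ)
    (p : Ideal (MvPolynomial σ K)) (hp : p.IsPrime)
    (hyp : (X y : MvPolynomial σ K) ∉ p)
    (hcolon : ((coverIdeal K H.E) ^ s).colon
        (Ideal.span {(monomial d (1 : K) : MvPolynomial σ K)}) = p) :
    ((coverIdeal K (H.E.filter (fun f => f ⊆ H.V.erase y))) ^ s).colon
        (Ideal.span {(monomial d (1 : K) : MvPolynomial σ K)}) = p := by
  have havoid : ∀ f ∈ H.E, y ∉ f → f ∈ H.E.filter (fun f => f ⊆ H.V.erase y) :=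
    fun f hf hyf => Finset.mem_filter.mpr
      ⟨hf, fun v hv => Finset.mem_erase.mpr ⟨fun hvy => hyf (hvy ▸ hv), H.edge_sub f hf hv⟩⟩
  exact Ideal.colon_pow_eq_of_le_of_span_mul_le hyp (coverIdeal_anti K (Finset.filter_subset _ _))
    (span_X_mul_coverIdeal_le K y havoid) s hcolon

/-- Under Notation (*): if `(J(H)^s : m) = p` is prime with `y ∉ p`, then
`(J(H̃)^s : m) = p`, where `H̃ = H_X` is the induced subhypergraph on `X`. -/
theorem colon_induced_of_colon_prime_not_mem_y {σ K : Type*} [DecidableEq σ] [Field K]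
    (H : Hypergraph' σ) (y : σ) (ey : Finset σ)
    (hyV : y ∈ H.V) (heyE : ey ∈ H.E) (hyey : y ∈ ey)
    (huniq : ∀ f ∈ H.E, y ∈ f → f = ey)
    (s : ℕ) (d : σ →₀ ℕ)
    (p : Ideal (MvPolynomial σ K)) (hp : p.IsPrime)
    (hyp : (X y : MvPolynomial σ K) ∉ p)
    (hcolon : ((coverIdeal K H.E) ^ s).colon
        (Ideal.span {(monomial d (1 : K) : MvPolynomial σ K)}) = p) :
    ((coverIdeal K (H.E.filter (fun f => f ⊆ H.V.erase y))) ^ s).colon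
        (Ideal.span {(monomial d (1 : K) : MvPolynomial σ K)}) = p :=
  colon_induced_of_colon_prime_not_mem_y_general H y s d p hp hyp hcolon
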